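/- Let H be a real symmetric n×n matrix strictly supported on G and let ψ ∈ ℝ^V be an eigenvector of H with eigenvalue λ. Let Ψ be the |V|×|V| diagonal matrix with entries Ψ_{rr} = ψ_r, and let Φ be the |E|×|E| diagonal matrix with Φ_{(r→s)} = −ψ_r H_{rs} ψ_s. Then d^⊤ Φ d = Ψ(H − λI)Ψ, where d is the coboundary (incidence) map of G. -/

import Mathlib

open Matrix

/-- A finite simple graph with a chosen orientation of each edge:
`E` is the edge index type, each edge `e` goes from `src e` to `tgt e`. -/
structure OrientedGraph (V E : Type*) where
  src : E → V
  tgt : E → V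
  loopless : ∀ e, src e ≠ tgt e
  edgeInj : ∀ e f, (src e = src f ∧ tgt e = tgt f) ∨ (src e = tgt f ∧ tgt e = src f) → e = f

/-- The underlying simple graph: `r` and `s` are adjacent iff some oriented edge joins them. -/
def OrientedGraph.toSimpleGraph {V E : Type*} (G : OrientedGraph V E) : SimpleGraph V where
  Adj r s := ∃ e, (G.src e = r ∧ G.tgt e = s) ∨ (G.src e = s ∧ G.tgt e = r)
  symm := by
    refine ⟨?_⟩
    intro r s h
    obtain ⟨e, h⟩ := h
    exact ⟨e, h.symm⟩
  loopless := by
    refine ⟨?_⟩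
    intro r h
    obtain ⟨e, h⟩ := h
    rcases h with ⟨h1, h2⟩ | ⟨h1, h2⟩ <;> exact G.loopless e (h1.trans h2.symm)

/-- `H` is strictly supported on `G`: off-diagonal entries are nonzero exactly on edges. -/
def OrientedGraph.StrictSupport {V E : Type*} (G : OrientedGraph V E)
    (H : Matrix V V ℝ) : Prop :=
  ∀ r s, r ≠ s → (H r s ≠ 0 ↔ G.toSimpleGraph.Adj r s)

/-- `H` is supported on `G`: off-diagonal nonzero entries occur only on edges. -/
def OrientedGraph.Support {V E : Type*} (G : OrientedGraph V E)
    (H : Matrix V V ℝ) : Prop :=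
  ∀ r s, r ≠ s → H r s ≠ 0 → G.toSimpleGraph.Adj r s

/-- The coboundary map `d : ℝ^V → ℝ^E`, `(dθ)_{(r→s)} = θ_s - θ_r`, as an `E × V` matrix. -/
def OrientedGraph.cob {V E : Type*} [DecidableEq V] (G : OrientedGraph V E) :
    Matrix E V ℝ :=
  Matrix.of fun e v => (if G.tgt e = v then (1 : ℝ) else 0) - (if G.src e = v then (1 : ℝ) else 0)

/-- The cycle space `Z = ker dᵀ ⊆ ℝ^E`. -/
noncomputable def OrientedGraph.cycleSpace {V E : Type*} [Fintype V] [Fintype E]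
    [DecidableEq V] (G : OrientedGraph V E) : Submodule ℝ (E → ℝ) :=
  LinearMap.ker (G.cob)ᵀ.mulVecLin

/-- The diagonal matrix `Φ` on `ℝ^E` with entries `Φ_{(r→s)} = -ψ_r H_{rs} ψ_s`. -/
noncomputable def PhiMat {V E : Type*} [DecidableEq E] (G : OrientedGraph V E)
    (H : Matrix V V ℝ) (ψ : V → ℝ) : Matrix E E ℝ :=
  Matrix.diagonal fun e => -(ψ (G.src e) * H (G.src e) (G.tgt e) * ψ (G.tgt e))

/-- The nodal count `ν(ψ,H) = #{(r→s) ∈ E : ψ_r H_{rs} ψ_s > 0}`. -/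
noncomputable def nodalCount {V E : Type*} (G : OrientedGraph V E)
    (H : Matrix V V ℝ) (ψ : V → ℝ) : ℕ :=
  Nat.card {e : E // 0 < ψ (G.src e) * H (G.src e) (G.tgt e) * ψ (G.tgt e)}

/-- `C` is a frame for the cycle space: its columns form a basis of `Z`. -/
def IsFrame {V E : Type*} [Fintype V] [Fintype E] [DecidableEq V]
    (G : OrientedGraph V E) {β : ℕ} (C : Matrix E (Fin β) ℝ) : Prop :=
  LinearMap.ker C.mulVecLin = ⊥ ∧ LinearMap.range C.mulVecLin = G.cycleSpace

/-- `n₋(A)`: the number of negative eigenvalues (with multiplicity) of a hermitian matrix. -/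
noncomputable def negEig {𝕜 : Type*} [RCLike 𝕜] {m : Type*} [Fintype m] [DecidableEq m]
    (A : Matrix m m 𝕜) : ℕ :=
  if h : A.IsHermitian then Nat.card {i // h.eigenvalues i < 0} else 0

/-- `n₊(A)`: the number of positive eigenvalues (with multiplicity) of a hermitian matrix. -/
noncomputable def posEig {𝕜 : Type*} [RCLike 𝕜] {m : Type*} [Fintype m] [DecidableEq m]
    (A : Matrix m m 𝕜) : ℕ :=
  if h : A.IsHermitian then Nat.card {i // 0 < h.eigenvalues i} else 0

/-- `n₀(A)`: the number of zero eigenvalues of a hermitian matrix, i.e. `dim ker A`. -/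
noncomputable def zeroEig {𝕜 : Type*} [RCLike 𝕜] {m : Type*} [Fintype m] [DecidableEq m]
    (A : Matrix m m 𝕜) : ℕ :=
  Module.finrank 𝕜 (LinearMap.ker A.mulVecLin)

/-- `n₋([A]_W)`: the Morse index (number of negative eigenvalues) of the compression of
a hermitian matrix `A` to the subspace `W`, i.e. the maximal dimension of a subspace of `W`
on which the hermitian form of `A` is negative definite. -/
noncomputable def negIndexOn {𝕜 : Type*} [RCLike 𝕜] {m : Type*} [Fintype m]
    (A : Matrix m m 𝕜) (W : Submodule 𝕜 (m → 𝕜)) : ℕ :=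
  sSup {k : ℕ | ∃ U : Submodule 𝕜 (m → 𝕜), U ≤ W ∧ Module.finrank 𝕜 U = k ∧
    ∀ x ∈ U, x ≠ 0 → RCLike.re (star x ⬝ᵥ A.mulVec x) < 0}

/-- `n₊([A]_W)`: the number of positive eigenvalues of the compression of a hermitian
matrix `A` to the subspace `W`. -/
noncomputable def posIndexOn {𝕜 : Type*} [RCLike 𝕜] {m : Type*} [Fintype m]
    (A : Matrix m m 𝕜) (W : Submodule 𝕜 (m → 𝕜)) : ℕ :=
  sSup {k : ℕ | ∃ U : Submodule 𝕜 (m → 𝕜), U ≤ W ∧ Module.finrank 𝕜 U = k ∧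
    ∀ x ∈ U, x ≠ 0 → 0 < RCLike.re (star x ⬝ᵥ A.mulVec x)}

/-- The linear functional `x ↦ v ⬝ᵥ x`. -/
noncomputable def dotLeft {𝕜 : Type*} [RCLike 𝕜] {m : Type*} [Fintype m] (v : m → 𝕜) :
    (m → 𝕜) →ₗ[𝕜] 𝕜 where
  toFun x := v ⬝ᵥ x
  map_add' x y := by simp [dotProduct_add]
  map_smul' c x := by simp [dotProduct_smul]

/-- `n₀([A]_W)`: the dimension of the kernel of the compression of `A` to `W`,
i.e. of `{x ∈ W : Ax ⊥ W}`. -/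
noncomputable def zeroIndexOn {𝕜 : Type*} [RCLike 𝕜] {m : Type*} [Fintype m]
    (A : Matrix m m 𝕜) (W : Submodule 𝕜 (m → 𝕜)) : ℕ :=
  Module.finrank 𝕜
    ↥(W ⊓ ⨅ y : W, LinearMap.ker ((dotLeft (star (y : m → 𝕜))).comp A.mulVecLin))

/-- Extension of `α ∈ ℝ^E` to an antisymmetric function on pairs of vertices:
`α_{rs} = α_e` if `e = (r→s) ∈ E`, `α_{rs} = -α_e` if `e = (s→r) ∈ E`, and `0` otherwise. -/
noncomputable def alphaExt {V E : Type*} [Fintype E] [DecidableEq V]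
    (G : OrientedGraph V E) (α : E → ℝ) (r s : V) : ℝ :=
  ∑ e : E, ((if G.src e = r ∧ G.tgt e = s then α e else 0) -
            (if G.src e = s ∧ G.tgt e = r then α e else 0))

/-- The phase-perturbed matrix `H_α` with `(H_α)_{rs} = e^{iα_{rs}} H_{rs}` for `r ≠ s`. -/
noncomputable def phaseMat {V E : Type*} [Fintype E] [DecidableEq V]
    (G : OrientedGraph V E) (H : Matrix V V ℝ) (α : E → ℝ) : Matrix V V ℂ :=
  Matrix.of fun r s =>
    if r = s then (H r r : ℂ)
    else Complex.exp (Complex.I * (alphaExt G α r s : ℂ)) * (H r s : ℂ)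

/-! Put `A = Ψ (H - λ I) Ψ`. The eigenvalue equation says exactly that `A` has zero row sums,
and strict support says that its off-diagonal entries `ψ_r H_rs ψ_s` vanish off the edges.
A symmetric matrix with zero row sums equals `-½ ∑_{a,b} A_ab (δ_b - δ_a)(δ_b - δ_a)ᵀ`; the
summand is symmetric in `(a, b)` and vanishes unless `a ~ b`, so the double sum is twice the
sum over the oriented edges, and that sum is `-dᵀ Φ d`. -/

namespace OrientedGraph

variable {V E : Type*} (G : OrientedGraph V E)

def dart : E ⊕ E → V × V :=
  Sum.elim (fun e => (G.src e, G.tgt e)) (fun e => (G.tgt e, G.src e))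

theorem dart_injective : Function.Injective G.dart := by
  rintro (e | e) (f | f) h <;> simp only [dart, Sum.elim_inl, Sum.elim_inr, Prod.mk.injEq] at h
  · exact congrArg Sum.inl (G.edgeInj e f (Or.inl h))
  · obtain rfl := G.edgeInj e f (Or.inr h)
    exact absurd h.1 (G.loopless e)
  · obtain rfl := G.edgeInj e f (Or.inr ⟨h.2, h.1⟩)
    exact absurd h.2 (G.loopless e)
  · exact congrArg Sum.inr (G.edgeInj e f (Or.inl ⟨h.2, h.1⟩))

theorem range_dart : Set.range G.dart = {p | G.toSimpleGraph.Adj p.1 p.2} := by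
  ext ⟨r, s⟩
  constructor
  · rintro ⟨e | e, he⟩ <;> simp only [dart, Sum.elim_inl, Sum.elim_inr, Prod.mk.injEq] at he
    · exact ⟨e, Or.inl he⟩
    · exact ⟨e, Or.inr ⟨he.2, he.1⟩⟩
  · rintro ⟨e, ⟨hr, hs⟩ | ⟨hs, hr⟩⟩
    · exact ⟨Sum.inl e, by simp [dart, hr, hs]⟩
    · exact ⟨Sum.inr e, by simp [dart, hr, hs]⟩

theorem sum_sum_eq_sum_edges [Fintype V] [Fintype E] {M : Type*} [AddCommMonoid M]
    (f : V → V → M) (hf : ∀ a b, ¬ G.toSimpleGraph.Adj a b → f a b = 0) :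
    ∑ a, ∑ b, f a b = ∑ e, (f (G.src e) (G.tgt e) + f (G.tgt e) (G.src e)) := by
  calc ∑ a, ∑ b, f a b = ∑ p : V × V, f p.1 p.2 := (Fintype.sum_prod_type' f).symm
    _ = ∑ x, f (G.dart x).1 (G.dart x).2 := by
      refine (Fintype.sum_of_injective G.dart G.dart_injective _ _ ?_ fun _ => rfl).symm
      intro p hp
      rw [range_dart] at hp
      exact hf p.1 p.2 hp
    _ = _ := by simp [dart, Fintype.sum_sum_type, Finset.sum_add_distrib]

end OrientedGraph

theorem Matrix.sum_sum_incidence_mul_mul_incidence {V R : Type*} [Fintype V] [DecidableEq V]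
    [CommRing R] (A : Matrix V V R) (hA : A.IsSymm) (hrow : A *ᵥ 1 = 0) (r s : V) :
    ∑ a, ∑ b, ((if b = r then 1 else 0) - (if a = r then 1 else 0)) * A a b *
      ((if b = s then 1 else 0) - (if a = s then 1 else 0)) = -(2 * A r s) := by
  have hrow' : ∀ a, ∑ b, A a b = 0 := fun a => by
    simpa [mulVec, dotProduct] using congrFun hrow a
  simp [sub_mul, mul_sub, ite_mul, mul_ite, Finset.sum_sub_distrib,
    Finset.sum_ite_eq', hrow', hA.apply]
  ring

theorem OrientedGraph.cob_transpose_mul_diagonal_mul_cob {V E : Type*} [Fintype V] [Fintype E]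
    [DecidableEq V] [DecidableEq E] (G : OrientedGraph V E) (A : Matrix V V ℝ) (hA : A.IsSymm)
    (hrow : A *ᵥ 1 = 0) (hsupp : ∀ a b, a ≠ b → ¬ G.toSimpleGraph.Adj a b → A a b = 0) :
    (G.cob)ᵀ * diagonal (fun e => -A (G.src e) (G.tgt e)) * G.cob = A := by
  ext r s
  set F : V → V → ℝ := fun a b => ((if b = r then 1 else 0) - (if a = r then 1 else 0)) *
    A a b * ((if b = s then 1 else 0) - (if a = s then 1 else 0)) with hF
  have hF_swap : ∀ a b, F b a = F a b := fun a b => by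
    simp only [hF, hA.apply a b]
    ring
  have hF_adj : ∀ a b, ¬ G.toSimpleGraph.Adj a b → F a b = 0 := by
    intro a b hab
    by_cases h : a = b
    · simp [hF, h]
    · simp [hF, hsupp a b h hab]
  have hentry : ((G.cob)ᵀ * diagonal (fun e => -A (G.src e) (G.tgt e)) * G.cob) r s =
      -∑ e, F (G.src e) (G.tgt e) := by
    rw [mul_apply, ← Finset.sum_neg_distrib]
    simp only [mul_diagonal, transpose_apply, cob, of_apply, hF]
    exact Finset.sum_congr rfl fun e _ => by ring
  have hedges : ∑ e, (F (G.src e) (G.tgt e) + F (G.tgt e) (G.src e)) =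
      2 * ∑ e, F (G.src e) (G.tgt e) := by
    rw [Finset.mul_sum]
    exact Finset.sum_congr rfl fun e _ => by rw [hF_swap]; ring
  have hsum := G.sum_sum_eq_sum_edges F hF_adj
  rw [hedges, A.sum_sum_incidence_mul_mul_incidence hA hrow] at hsum
  linarith

theorem coboundary_funny_product_general
    {V E : Type*} [Fintype V] [Fintype E] [DecidableEq V] [DecidableEq E]
    (G : OrientedGraph V E)
    (H : Matrix V V ℝ) (hsymm : H.IsSymm) (hsupp : G.StrictSupport H)
    (lam : ℝ) (ψ : V → ℝ) (heig : H.mulVec ψ = lam • ψ) :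
    (G.cob)ᵀ * PhiMat G H ψ * G.cob =
      Matrix.diagonal ψ * (H - lam • (1 : Matrix V V ℝ)) * Matrix.diagonal ψ := by
  set A := Matrix.diagonal ψ * (H - lam • (1 : Matrix V V ℝ)) * Matrix.diagonal ψ
  have hA_offDiag : ∀ a b, a ≠ b → A a b = ψ a * H a b * ψ b := fun a b hab => by
    simp [A, diagonal_mul, mul_diagonal, one_apply_ne hab]
  have hA_symm : A.IsSymm := by
    simp only [A, IsSymm, transpose_mul, diagonal_transpose, (hsymm.sub (isSymm_one.smul lam)).eq,
      Matrix.mul_assoc]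
  have hA_row : A *ᵥ 1 = 0 := by
    have hψ : diagonal ψ *ᵥ 1 = ψ := funext fun a => by simp [mulVec_diagonal]
    simp [A, ← mulVec_mulVec, hψ, sub_mulVec, smul_mulVec, heig]
  have hA_supp : ∀ a b, a ≠ b → ¬ G.toSimpleGraph.Adj a b → A a b = 0 := fun a b hab hadj => by
    rw [hA_offDiag a b hab, not_not.mp (mt (hsupp a b hab).mp hadj)]
    ring
  have hPhi : PhiMat G H ψ = diagonal fun e => -A (G.src e) (G.tgt e) := by
    simp only [PhiMat, hA_offDiag _ _ (G.loopless _)]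
  rw [hPhi]
  exact G.cob_transpose_mul_diagonal_mul_cob A hA_symm hA_row hA_supp

/-- `dᵀ Φ d = Ψ (H - λ I) Ψ`. -/
theorem coboundary_funny_product
    {V E : Type*} [Fintype V] [Fintype E] [DecidableEq V] [DecidableEq E]
    (G : OrientedGraph V E) (hconn : G.toSimpleGraph.Connected)
    (H : Matrix V V ℝ) (hsymm : H.IsSymm) (hsupp : G.StrictSupport H)
    (lam : ℝ) (ψ : V → ℝ) (heig : H.mulVec ψ = lam • ψ) (hψ0 : ψ ≠ 0) :
    (G.cob)ᵀ * PhiMat G H ψ * G.cob =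
      Matrix.diagonal ψ * (H - lam • (1 : Matrix V V ℝ)) * Matrix.diagonal ψ :=
  coboundary_funny_product_general G H hsymm hsupp lam ψ heig
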